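/- arXiv:0807.4123 — 3 statements merged into one kernel-verified Lean document; each statement's English description precedes it below -/
import Mathlib

section
/- Let V be a commutative unital quantale. Let ψ : (W,d) ⇸ (U,u), φ : (W,d) ⇸ (Y,b) be V-distributors and let α : (Y,b) ⇸ (Z,c) be a right adjoint V-distributor. Then α ∘ (φ ⟜ ψ) = (α ∘ φ) ⟜ ψ as distributors (U,u) ⇸ (Z,c). -/
universe u

/-- A commutative unital quantale: a complete lattice with a commutative monoid
structure whose multiplication distributes over arbitrary suprema. -/
class CommQuantale (V : Type u) extends CompleteLattice V, CommMonoid V where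
  mul_sSup : ∀ (x : V) (s : Set V), x * sSup s = ⨆ v ∈ s, x * v

variable {V : Type u} [CommQuantale V]

/-- The internal hom of the quantale: `qhom u v = sSup {w | u * w ≤ v}`. -/
def qhom (u v : V) : V := sSup {w | u * w ≤ v}

theorem mul_iSup' {ι : Sort*} (u : V) (v : ι → V) : u * (⨆ i, v i) = ⨆ i, u * v i := by
  rw [iSup, CommQuantale.mul_sSup, iSup_range]

theorem mul_mono_right' (u : V) {w w' : V} (h : w ≤ w') : u * w ≤ u * w' := by
  have hs : sSup ({w, w'} : Set V) = w' := by
    apply le_antisymm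
    · exact sSup_le (by rintro x (rfl | rfl); exacts [h, le_rfl])
    · exact le_sSup (by simp)
  have hm := CommQuantale.mul_sSup u ({w, w'} : Set V)
  rw [hs] at hm
  rw [hm]
  exact le_iSup₂ (f := fun v (_ : v ∈ ({w, w'} : Set V)) => u * v) w (by simp)

theorem mul_mono_left' {w w' : V} (h : w ≤ w') (u : V) : w * u ≤ w' * u := by
  rw [mul_comm w u, mul_comm w' u]; exact mul_mono_right' u h

theorem le_qhom_iff {u v w : V} : w ≤ qhom u v ↔ u * w ≤ v := by
  constructor
  · intro h
    have h2 : u * qhom u v ≤ v := by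
      rw [qhom, CommQuantale.mul_sSup]
      exact iSup₂_le fun w hw => hw
    exact le_trans (mul_mono_right' u h) h2
  · intro h; exact le_sSup h

theorem bot_mul' (u : V) : (⊥ : V) * u = ⊥ := by
  rw [mul_comm]
  have hm := CommQuantale.mul_sSup u (∅ : Set V)
  simpa using hm

/-- A `V`-category structure on `X`. -/
structure VCatStr (V : Type u) [CommQuantale V] (X : Type u) where
  hom : X → X → V
  refl : ∀ x, (1 : V) ≤ hom x x
  comp : ∀ x y z, hom x y * hom y z ≤ hom x z

/-- `V`-functoriality. -/
def IsVFunctor {X Y : Type u} (a : VCatStr V X) (b : VCatStr V Y) (f : X → Y) : Prop :=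
  ∀ x x', a.hom x x' ≤ b.hom (f x) (f x')

/-- `φ` is a `V`-distributor `(X,a) ⇸ (Y,b)`. -/
def IsDist {X Y : Type u} (a : VCatStr V X) (b : VCatStr V Y) (φ : X → Y → V) : Prop :=
  (∀ x' x y, a.hom x' x * φ x y ≤ φ x' y) ∧ (∀ x y y', φ x y * b.hom y y' ≤ φ x y')

/-- Composite `ψ ∘ φ` of distributors (`φ` first). -/
def dComp {X Y Z : Type u} (ψ : Y → Z → V) (φ : X → Y → V) : X → Z → V :=
  fun x z => ⨆ y, φ x y * ψ y z

/-- The extension `γ ⟜ α`. -/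
def dExt {X Y Z : Type u} (γ : X → Z → V) (α : X → Y → V) : Y → Z → V :=
  fun y z => ⨅ x, qhom (α x y) (γ x z)

/-- `f_*`. -/
def fStar {X Y : Type u} (b : VCatStr V Y) (f : X → Y) : X → Y → V :=
  fun x y => b.hom (f x) y

/-- `f^*`. -/
def fCostar {X Y : Type u} (b : VCatStr V Y) (f : X → Y) : Y → X → V :=
  fun y x => b.hom y (f x)

/-- `ψ ⊣ φ` is an adjunction of distributors, `ψ : (A,α) ⇸ (B,β)`, `φ : (B,β) ⇸ (A,α)`. -/
def DistAdj {A B : Type u} (α : VCatStr V A) (β : VCatStr V B)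
    (ψ : A → B → V) (φ : B → A → V) : Prop :=
  (∀ x x', α.hom x x' ≤ ⨆ y, ψ x y * φ y x') ∧
  (∀ y y', (⨆ x, φ y x * ψ x y') ≤ β.hom y y')

/-- `φ : (B,β) ⇸ (A,α)` is a right adjoint distributor. -/
def IsRightAdjDist {A B : Type u} (β : VCatStr V B) (α : VCatStr V A) (φ : B → A → V) : Prop :=
  ∃ ψ : A → B → V, IsDist α β ψ ∧ DistAdj α β ψ φ

/-- The pointwise order on `V`-functors. -/
def VLe {X Y : Type u} (b : VCatStr V Y) (f g : X → Y) : Prop :=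
  ∀ x, (1 : V) ≤ b.hom (f x) (g x)

/-- Equivalence of `V`-functors. -/
def VEquiv {X Y : Type u} (b : VCatStr V Y) (f g : X → Y) : Prop :=
  VLe b f g ∧ VLe b g f

def FullyFaithful {X Y : Type u} (a : VCatStr V X) (b : VCatStr V Y) (f : X → Y) : Prop :=
  ∀ x x', b.hom (f x) (f x') = a.hom x x'

def DenseF {X Y : Type u} (b : VCatStr V Y) (f : X → Y) : Prop :=
  ∀ y y', (⨆ x, b.hom y (f x) * b.hom (f x) y') = b.hom y y'

/-- `f` is a left adjoint `V`-functor. -/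
def LeftAdjointF {X Y : Type u} (a : VCatStr V X) (b : VCatStr V Y) (f : X → Y) : Prop :=
  ∃ g : Y → X, IsVFunctor b a g ∧ (∀ x, (1 : V) ≤ a.hom x (g (f x))) ∧
    (∀ y, (1 : V) ≤ b.hom (f (g y)) y)

/-- The one-point `V`-category `G`. -/
def unitCat (V : Type u) [CommQuantale V] : VCatStr V PUnit where
  hom _ _ := 1
  refl _ := le_refl 1
  comp _ _ _ := (one_mul 1).le

/-- Presheaves on `(X,a)`: distributors `(X,a) ⇸ G`. -/
def IsPresheaf {X : Type u} (a : VCatStr V X) (ψ : X → V) : Prop :=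
  ∀ x' x, a.hom x' x * ψ x ≤ ψ x'

/-- A class of `V`-distributors: for each pair of `V`-categories a predicate on maps. -/
def DistClass (V : Type u) [CommQuantale V] : Type (u + 1) :=
  ∀ ⦃X Y : Type u⦄, VCatStr V X → VCatStr V Y → (X → Y → V) → Prop

/-- The presheaf `ψ`, seen as distributor into `G`, lies in `Φ`. -/
def InPhi (Φ : DistClass V) {X : Type u} (a : VCatStr V X) (ψ : X → V) : Prop :=
  Φ a (unitCat V) (fun x _ => ψ x)

/-- Axioms (Ax1)–(Ax3) on a class of distributors. -/
structure DistAx (Φ : DistClass V) : Prop where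
  ax1 : ∀ {X Y : Type u} (a : VCatStr V X) (b : VCatStr V Y) (f : X → Y),
      IsVFunctor a b f → Φ b a (fCostar b f)
  ax2_left : ∀ {W X Y : Type u} (d : VCatStr V W) (a : VCatStr V X) (b : VCatStr V Y)
      (φ : W → Y → V) (f : X → Y), IsDist d b φ → IsVFunctor a b f → Φ d b φ →
      Φ d a (dComp (fCostar b f) φ)
  ax2_right : ∀ {X Y Z : Type u} (a : VCatStr V X) (b : VCatStr V Y) (c : VCatStr V Z)
      (φ : X → Z → V) (f : X → Y), IsDist a c φ → IsVFunctor a b f → Φ a c φ →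
      Φ b c (dComp φ (fCostar b f))
  ax2_star : ∀ {W X Z : Type u} (d : VCatStr V W) (a : VCatStr V X) (c : VCatStr V Z)
      (φ : X → Z → V) (f : W → X), IsDist a c φ → IsVFunctor d a f → Φ a c φ →
      Φ d a (fStar a f) → Φ d c (dComp φ (fStar a f))
  ax3 : ∀ {X Y : Type u} (a : VCatStr V X) (b : VCatStr V Y) (φ : X → Y → V),
      IsDist a b φ → (∀ y, Φ a (unitCat V) (fun x _ => φ x y)) → Φ a b φ

/-- Axiom (Ax4): `f_* ∈ Φ` for every surjective `V`-functor `f`. -/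
def Ax4 (Φ : DistClass V) : Prop :=
  ∀ {X Y : Type u} (a : VCatStr V X) (b : VCatStr V Y) (f : X → Y),
    IsVFunctor a b f → Function.Surjective f → Φ a b (fStar b f)

/-- `f` is `Φ`-dense. -/
def PhiDense (Φ : DistClass V) {X Y : Type u} (a : VCatStr V X) (b : VCatStr V Y)
    (f : X → Y) : Prop :=
  Φ a b (fStar b f)

/-- The `V`-category structure on `X → V`. -/
def funCat (V : Type u) [CommQuantale V] (X : Type u) : VCatStr V (X → V) where
  hom ψ ψ' := ⨅ x, qhom (ψ x) (ψ' x)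
  refl ψ := le_iInf fun x => le_qhom_iff.mpr (mul_one _).le
  comp ψ χ ω := le_iInf fun x => le_qhom_iff.mpr <| by
    calc ψ x * ((⨅ x', qhom (ψ x') (χ x')) * (⨅ x', qhom (χ x') (ω x')))
        = (ψ x * (⨅ x', qhom (ψ x') (χ x'))) * (⨅ x', qhom (χ x') (ω x')) :=
          (mul_assoc _ _ _).symm
      _ ≤ χ x * (⨅ x', qhom (χ x') (ω x')) :=
          mul_mono_left' (le_qhom_iff.mp (iInf_le (fun x' => qhom (ψ x') (χ x')) x)) _
      _ ≤ ω x := le_qhom_iff.mp (iInf_le (fun x' => qhom (χ x') (ω x')) x)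

/-- Full sub-`V`-category on a predicate. -/
def subCat {X : Type u} (a : VCatStr V X) (P : X → Prop) : VCatStr V {x : X // P x} where
  hom x y := a.hom x.1 y.1
  refl x := a.refl x.1
  comp x y z := a.comp x.1 y.1 z.1

/-- Carrier of the presheaf `V`-category `PX`. -/
def PCarrier {X : Type u} (a : VCatStr V X) : Type u := {ψ : X → V // IsPresheaf a ψ}

/-- The presheaf `V`-category `PX`. -/
def pCat {X : Type u} (a : VCatStr V X) : VCatStr V (PCarrier a) :=
  subCat (funCat V X) (IsPresheaf a)

/-- Carrier of `ΦX`: presheaves lying in `Φ`. -/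
def PhiCarrier (Φ : DistClass V) {X : Type u} (a : VCatStr V X) : Type u :=
  {ψ : X → V // IsPresheaf a ψ ∧ InPhi Φ a ψ}

/-- The `V`-category `ΦX`. -/
def phiCat (Φ : DistClass V) {X : Type u} (a : VCatStr V X) : VCatStr V (PhiCarrier Φ a) :=
  subCat (funCat V X) fun ψ => IsPresheaf a ψ ∧ InPhi Φ a ψ

/-- The inclusion `ΦX → PX`. -/
def phiIncl (Φ : DistClass V) {X : Type u} (a : VCatStr V X) : PhiCarrier Φ a → PCarrier a :=
  fun ψ => ⟨ψ.1, ψ.2.1⟩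

/-- The corestricted Yoneda functor `y^Φ_X : X → ΦX`. -/
def yPhi (Φ : DistClass V) (hΦ : DistAx Φ) {X : Type u} (a : VCatStr V X) (x : X) :
    PhiCarrier Φ a :=
  ⟨fun x' => a.hom x' x,
   fun x' x'' => a.comp x' x'' x,
   hΦ.ax1 (unitCat V) a (fun _ => x) (fun _ _ => a.refl x)⟩

/-- `Φf : ΦX → ΦY`, `ψ ↦ ψ ∘ f^*`. -/
def phiMap (Φ : DistClass V) (hΦ : DistAx Φ) {X Y : Type u} (a : VCatStr V X) (b : VCatStr V Y)
    (f : X → Y) (hf : IsVFunctor a b f) (ψ : PhiCarrier Φ a) : PhiCarrier Φ b :=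
  ⟨fun y => ⨆ x, b.hom y (f x) * ψ.1 x,
   by
    intro y' y
    rw [mul_iSup']
    refine iSup_le fun x => ?_
    refine le_trans ?_ (le_iSup _ x)
    calc b.hom y' y * (b.hom y (f x) * ψ.1 x)
        = (b.hom y' y * b.hom y (f x)) * ψ.1 x := (mul_assoc _ _ _).symm
      _ ≤ b.hom y' (f x) * ψ.1 x := mul_mono_left' (b.comp y' y (f x)) _,
   by
    have hd : IsDist a (unitCat V) (fun x (_ : PUnit) => ψ.1 x) :=
      ⟨fun x' x _ => ψ.2.1 x' x, fun x _ _ => le_of_eq (mul_one _)⟩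
    exact hΦ.ax2_right a b (unitCat V) _ f hd hf ψ.2.2⟩

/-- `g` is the `φ`-weighted colimit of `h`, i.e. `g_* = h_* ⟜ φ`. -/
def IsColimit {Y Z X : Type u} (_b : VCatStr V Y) (_c : VCatStr V Z) (a : VCatStr V X)
    (φ : Y → Z → V) (h : Y → X) (g : Z → X) : Prop :=
  ∀ z x, a.hom (g z) x = ⨅ y, qhom (φ y z) (a.hom (h y) x)

/-- `Φ`-cocompleteness. -/
def PhiCocomplete (Φ : DistClass V) {X : Type u} (a : VCatStr V X) : Prop :=
  ∀ ⦃Y Z : Type u⦄ (b : VCatStr V Y) (c : VCatStr V Z) (φ : Y → Z → V) (h : Y → X),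
    IsDist b c φ → Φ b c φ → IsVFunctor b a h →
    ∃ g : Z → X, IsVFunctor c a g ∧ IsColimit b c a φ h g

/-- `Φ`-cocontinuity. -/
def PhiCocontinuous (Φ : DistClass V) {X X' : Type u} (a : VCatStr V X) (a' : VCatStr V X')
    (f : X → X') : Prop :=
  ∀ ⦃Y Z : Type u⦄ (b : VCatStr V Y) (c : VCatStr V Z) (φ : Y → Z → V) (h : Y → X) (g : Z → X),
    IsDist b c φ → Φ b c φ → IsVFunctor b a h → IsVFunctor c a g →
    IsColimit b c a φ h g → IsColimit b c a' φ (f ∘ h) (f ∘ g)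

/-- `Φ`-injectivity. -/
def PhiInjective (Φ : DistClass V) {X : Type u} (a : VCatStr V X) : Prop :=
  ∀ ⦃A B : Type u⦄ (α : VCatStr V A) (β : VCatStr V B) (f : A → X) (i : A → B),
    IsVFunctor α a f → IsVFunctor α β i → FullyFaithful α β i → PhiDense Φ α β i →
    ∃ g : B → X, IsVFunctor β a g ∧ VEquiv a (g ∘ i) f

/-- Separatedness. -/
def Separated {X : Type u} (a : VCatStr V X) : Prop :=
  ∀ ⦃Y : Type u⦄ (b : VCatStr V Y) (f g : Y → X),
    IsVFunctor b a f → IsVFunctor b a g → VEquiv a f g → f = g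

/-! The inequality `α ∘ (φ ⟜ ψ) ≤ (α ∘ φ) ⟜ ψ` holds for any `α` by the universal property of
the extension. For the converse, let `β ⊣ α`. Then `β ∘ ((α ∘ φ) ⟜ ψ) ∘ ψ ≤ β ∘ α ∘ φ ≤ φ`, so
`β ∘ ((α ∘ φ) ⟜ ψ) ≤ φ ⟜ ψ`; composing with `α` and using `1 ≤ α ∘ β` gives
`(α ∘ φ) ⟜ ψ ≤ α ∘ (φ ⟜ ψ)`. -/

theorem iSup_mul' {ι : Sort*} (v : ι → V) (u : V) : (⨆ i, v i) * u = ⨆ i, v i * u := by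
  simp only [mul_comm _ u, mul_iSup']

section Distributors

variable {X Y Z T : Type u}

theorem dComp_mono {ψ ψ' : Y → Z → V} {φ φ' : X → Y → V} (hψ : ψ ≤ ψ') (hφ : φ ≤ φ') :
    dComp ψ φ ≤ dComp ψ' φ' := fun x z =>
  iSup_mono fun y => (mul_mono_left' (hφ x y) _).trans (mul_mono_right' _ (hψ y z))

theorem dComp_assoc (χ : Z → T → V) (ψ : Y → Z → V) (φ : X → Y → V) :
    dComp χ (dComp ψ φ) = dComp (dComp χ ψ) φ := by
  funext x t
  simp only [dComp, iSup_mul', mul_iSup', mul_assoc]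
  exact iSup_comm

theorem dComp_le_iff_le_dExt {β : Y → Z → V} {α : X → Y → V} {γ : X → Z → V} :
    dComp β α ≤ γ ↔ β ≤ dExt γ α := by
  simp only [Pi.le_def, dComp, dExt, iSup_le_iff, le_iInf_iff, le_qhom_iff]
  exact ⟨fun h y z x => h x z y, fun h x z y => h y z x⟩

theorem dComp_dExt_le (γ : X → Z → V) (α : X → Y → V) : dComp (dExt γ α) α ≤ γ :=
  dComp_le_iff_le_dExt.mpr le_rfl

theorem le_dComp_hom (c : VCatStr V Z) (θ : X → Z → V) : θ ≤ dComp c.hom θ := fun x z =>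
  calc θ x z = θ x z * 1 := (mul_one _).symm
    _ ≤ θ x z * c.hom z z := mul_mono_right' _ (c.refl z)
    _ ≤ dComp c.hom θ x z := le_iSup (fun z' => θ x z' * c.hom z' z) z

theorem dComp_hom_le {b : VCatStr V Y} {φ : X → Y → V}
    (hφ : ∀ x y y', φ x y * b.hom y y' ≤ φ x y') : dComp b.hom φ ≤ φ := fun x y =>
  iSup_le fun y' => hφ x y' y

theorem dComp_dExt_le_dExt_dComp (α : Y → Z → V) (φ : X → Y → V) (ψ : X → T → V) :
    dComp α (dExt φ ψ) ≤ dExt (dComp α φ) ψ := by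
  rw [← dComp_le_iff_le_dExt, ← dComp_assoc]
  exact dComp_mono le_rfl (dComp_dExt_le φ ψ)

theorem dExt_dComp_le_dComp_dExt {b : VCatStr V Y} {c : VCatStr V Z} {α : Y → Z → V}
    {β : Z → Y → V} {φ : X → Y → V} (ψ : X → T → V)
    (hφ : ∀ x y y', φ x y * b.hom y y' ≤ φ x y') (hadj : DistAdj c b β α) :
    dExt (dComp α φ) ψ ≤ dComp α (dExt φ ψ) := by
  have hunit : c.hom ≤ dComp α β := fun z z' => hadj.1 z z'
  have hcounit : dComp β α ≤ b.hom := fun y y' => hadj.2 y y'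
  have hβ : dComp β (dExt (dComp α φ) ψ) ≤ dExt φ ψ := by
    rw [← dComp_le_iff_le_dExt]
    calc dComp (dComp β (dExt (dComp α φ) ψ)) ψ
        = dComp β (dComp (dExt (dComp α φ) ψ) ψ) := (dComp_assoc _ _ _).symm
      _ ≤ dComp β (dComp α φ) := dComp_mono le_rfl (dComp_dExt_le _ _)
      _ = dComp (dComp β α) φ := dComp_assoc _ _ _
      _ ≤ dComp b.hom φ := dComp_mono hcounit le_rfl
      _ ≤ φ := dComp_hom_le hφ
  calc dExt (dComp α φ) ψ
      ≤ dComp c.hom (dExt (dComp α φ) ψ) := le_dComp_hom c _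
    _ ≤ dComp (dComp α β) (dExt (dComp α φ) ψ) := dComp_mono hunit le_rfl
    _ = dComp α (dComp β (dExt (dComp α φ) ψ)) := (dComp_assoc _ _ _).symm
    _ ≤ dComp α (dExt φ ψ) := dComp_mono le_rfl hβ

end Distributors

theorem stmt0_general {W U Y Z : Type u}
    (d : VCatStr V W) (b : VCatStr V Y) (c : VCatStr V Z)
    (ψ : W → U → V) (φ : W → Y → V) (α : Y → Z → V)
    (hφ : IsDist d b φ)
    (hra : IsRightAdjDist b c α) :
    dComp α (dExt φ ψ) = dExt (dComp α φ) ψ := by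
  obtain ⟨β, -, hadj⟩ := hra
  exact le_antisymm (dComp_dExt_le_dExt_dComp α φ ψ) (dExt_dComp_le_dComp_dExt ψ hφ.2 hadj)

/-- Lemma 1.(1): if `α` is a right adjoint distributor, then
`α ∘ (φ ⟜ ψ) = (α ∘ φ) ⟜ ψ`. -/
theorem stmt0 {W U Y Z : Type u}
    (d : VCatStr V W) (uS : VCatStr V U) (b : VCatStr V Y) (c : VCatStr V Z)
    (ψ : W → U → V) (φ : W → Y → V) (α : Y → Z → V)
    (hψ : IsDist d uS ψ) (hφ : IsDist d b φ) (hα : IsDist b c α)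
    (hra : IsRightAdjDist b c α) :
    dComp α (dExt φ ψ) = dExt (dComp α φ) ψ :=
  stmt0_general d b c ψ φ α hφ hra
end

section
/- Let V be a commutative unital quantale and Φ a class of V-distributors satisfying (Ax1)–(Ax3). For every V-category (X,a), the corestricted Yoneda functor y^Φ_X : X → ΦX is Φ-dense; that is, the distributor (y^Φ_X)_* : (X,a) ⇸ ΦX, which is given by evaluation (y^Φ_X)_* x ψ = ψ x, belongs to Φ. -/
/-! By the Yoneda lemma `[a(-, x), ψ] = ψ x`, the distributor `(y^Φ_X)_*` is evaluation
`(x, ψ) ↦ ψ x`. Its columns are the presheaves `ψ ∈ ΦX` themselves, which lie in `Φ` by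
definition of `ΦX`, so (Ax3) puts the whole distributor in `Φ`. -/

universe u

variable {V : Type u} [CommQuantale V]

instance : MulLeftMono V := ⟨fun u _ _ h => mul_mono_right' u h⟩

theorem mul_qhom_le (u v : V) : u * qhom u v ≤ v := le_qhom_iff.mp le_rfl

theorem funCat_hom_le_qhom {X : Type u} (ψ ψ' : X → V) (x : X) :
    (funCat V X).hom ψ ψ' ≤ qhom (ψ x) (ψ' x) :=
  iInf_le (fun z => qhom (ψ z) (ψ' z)) x

theorem funCat_hom_yoneda {X : Type u} (a : VCatStr V X) {ψ : X → V} (hψ : IsPresheaf a ψ)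
    (x : X) : (funCat V X).hom (fun x' => a.hom x' x) ψ = ψ x := by
  apply le_antisymm
  · calc (funCat V X).hom (fun x' => a.hom x' x) ψ ≤ qhom (a.hom x x) (ψ x) :=
          funCat_hom_le_qhom _ ψ x
      _ ≤ a.hom x x * qhom (a.hom x x) (ψ x) := le_mul_of_one_le_left' (a.refl x)
      _ ≤ ψ x := mul_qhom_le _ _
  · exact le_iInf fun x' => le_qhom_iff.mpr (hψ x' x)

theorem isDist_eval {X : Type u} (a : VCatStr V X) {P : (X → V) → Prop}
    (hP : ∀ ψ, P ψ → IsPresheaf a ψ) :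
    IsDist a (subCat (funCat V X) P) (fun x ψ => ψ.1 x) := by
  refine ⟨fun x' x ψ => hP ψ.1 ψ.2 x' x, fun x ψ ψ' => ?_⟩
  calc ψ.1 x * (funCat V X).hom ψ.1 ψ'.1 ≤ ψ.1 x * qhom (ψ.1 x) (ψ'.1 x) :=
        mul_le_mul_right (funCat_hom_le_qhom _ _ x) _
    _ ≤ ψ'.1 x := mul_qhom_le _ _

section

variable {Φ : DistClass V} {X : Type u}

theorem isVFunctor_yPhi (hΦ : DistAx Φ) (a : VCatStr V X) :
    IsVFunctor a (phiCat Φ a) (yPhi Φ hΦ a) :=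
  fun x x' => le_iInf fun z => le_qhom_iff.mpr (a.comp z x x')

theorem fStar_yPhi (hΦ : DistAx Φ) (a : VCatStr V X) (x : X) (ψ : PhiCarrier Φ a) :
    fStar (phiCat Φ a) (yPhi Φ hΦ a) x ψ = ψ.1 x :=
  funCat_hom_yoneda a ψ.2.1 x

theorem DistAx.eval_mem (hΦ : DistAx Φ) (a : VCatStr V X) :
    Φ a (phiCat Φ a) (fun x ψ => ψ.1 x) :=
  hΦ.ax3 a (phiCat Φ a) _ (isDist_eval a fun _ hψ => hψ.1) fun ψ => ψ.2.2

end

/-- The corestricted Yoneda functor `y^Φ_X : X → ΦX` is `Φ`-dense, and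
`(y^Φ_X)_*` is given by evaluation. -/
theorem stmt7 (Φ : DistClass V) (hΦ : DistAx Φ) {X : Type u} (a : VCatStr V X) :
    IsVFunctor a (phiCat Φ a) (yPhi Φ hΦ a) ∧
    (∀ (x : X) (ψ : PhiCarrier Φ a), fStar (phiCat Φ a) (yPhi Φ hΦ a) x ψ = ψ.1 x) ∧
    PhiDense Φ a (phiCat Φ a) (yPhi Φ hΦ a) := by
  have heval : fStar (phiCat Φ a) (yPhi Φ hΦ a) = fun x ψ => ψ.1 x :=
    funext₂ (fStar_yPhi hΦ a)
  refine ⟨isVFunctor_yPhi hΦ a, fStar_yPhi hΦ a, ?_⟩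
  rw [PhiDense, heval]
  exact hΦ.eval_mem a
end

section
/- Let V be a commutative unital quantale and Φ a class of V-distributors satisfying (Ax1)–(Ax3). For a V-category (X,a) the following are equivalent: (i) (X,a) is Φ-injective; (ii) there is a V-functor S : ΦX → X with S ∘ y^Φ_X ≅ 1_X; (iii) y^Φ_X : X → ΦX has a left adjoint; (iv) (X,a) is Φ-cocomplete. -/
/-!
Everything is routed through the corestricted Yoneda functor `y : X → ΦX`. It is fully faithful,
and Φ-dense because `y_*` is the evaluation distributor `(x, ψ) ↦ ψ x`, whose columns are the
presheaves in `Φ` (Ax3). Injectivity applied to `y` gives a retraction `S` of `y`, and by the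
Yoneda lemma any such retraction is left adjoint to `y`. A left adjoint computes `colim(φ, h)` at
`z` as `S (Φh (φ (—) z))`, since `[Φh ψ, y x] = ⨅ w, hom (ψ w) (a (h w) x)`; conversely the
colimit of `1_X` weighted by evaluation is a retraction of `y`. Finally a retraction extends
`f : A → X` along a fully faithful Φ-dense `i : A → B` as `S ∘ Φf ∘ (z ↦ i_* (—) z)`, because
full faithfulness makes `i_* (—) (i x)` the representable `y x`, and `Φf ∘ y = y ∘ f`.
-/

universe u

variable {V : Type u} [CommQuantale V]

instance CommQuantale.toIsOrderedMonoid : IsOrderedMonoid V where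
  mul_le_mul_left _ _ h c := mul_mono_left' h c

theorem one_le_qhom_iff {u v : V} : (1 : V) ≤ qhom u v ↔ u ≤ v := by
  rw [le_qhom_iff, mul_one]

theorem qhom_iSup_left {ι : Sort*} (u : ι → V) (v : V) :
    qhom (⨆ i, u i) v = ⨅ i, qhom (u i) v :=
  eq_of_forall_le_iff fun w => by
    simp only [le_iInf_iff, le_qhom_iff, mul_comm _ w, mul_iSup', iSup_le_iff]

theorem qhom_iInf_right {ι : Sort*} (u : V) (v : ι → V) :
    qhom u (⨅ i, v i) = ⨅ i, qhom u (v i) :=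
  eq_of_forall_le_iff fun w => by simp only [le_iInf_iff, le_qhom_iff]

theorem qhom_mul_left (u w v : V) : qhom (u * w) v = qhom w (qhom u v) :=
  eq_of_forall_le_iff fun t => by simp only [le_qhom_iff, mul_assoc]

section VCat

variable {X Y Z : Type u} {a : VCatStr V X} {b : VCatStr V Y} {c : VCatStr V Z}

theorem IsVFunctor.comp {g : Y → Z} {f : X → Y} (hg : IsVFunctor b c g)
    (hf : IsVFunctor a b f) : IsVFunctor a c (g ∘ f) :=
  fun x x' => (hf x x').trans (hg _ _)

theorem FullyFaithful.isVFunctor {f : X → Y} (hf : FullyFaithful a b f) : IsVFunctor a b f :=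
  fun x x' => (hf x x').ge

theorem isDist_fStar {f : X → Y} (hf : IsVFunctor a b f) : IsDist a b (fStar b f) :=
  ⟨fun x' x _ => (mul_le_mul_left (hf x' x) _).trans (b.comp _ _ _),
   fun x y y' => b.comp (f x) y y'⟩

theorem hom_eq_of_adjoint {f : X → Y} {g : Y → X} (hf : IsVFunctor a b f)
    (hg : IsVFunctor b a g) (unit : ∀ x, (1 : V) ≤ a.hom x (g (f x)))
    (counit : ∀ y, (1 : V) ≤ b.hom (f (g y)) y) (x : X) (y : Y) :
    b.hom (f x) y = a.hom x (g y) := by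
  apply le_antisymm
  · calc b.hom (f x) y ≤ a.hom x (g (f x)) * a.hom (g (f x)) (g y) :=
          le_mul_of_one_le_of_le (unit x) (hg _ _)
      _ ≤ a.hom x (g y) := a.comp _ _ _
  · calc a.hom x (g y) ≤ b.hom (f x) (f (g y)) * b.hom (f (g y)) y :=
          le_mul_of_le_of_one_le (hf _ _) (counit y)
      _ ≤ b.hom (f x) y := b.comp _ _ _

theorem IsPresheaf.iInf_qhom_hom {ψ : X → V} (hψ : IsPresheaf a ψ) (x : X) :
    ⨅ x', qhom (a.hom x' x) (ψ x') = ψ x :=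
  le_antisymm ((le_mul_of_one_le_left' (a.refl x)).trans (le_qhom_iff.mp (iInf_le _ x)))
    (le_iInf fun x' => le_qhom_iff.mpr (hψ x' x))

theorem VCatStr.isPresheaf_hom (a : VCatStr V X) (x : X) :
    IsPresheaf a (fun x' => a.hom x' x) :=
  fun x' x'' => a.comp x' x'' x

end VCat

section Phi

variable {Φ : DistClass V} {X Y Z : Type u}
  {a : VCatStr V X} {b : VCatStr V Y} {c : VCatStr V Z}

theorem phiCat_hom_yPhi (hΦ : DistAx Φ) (x : X) (ψ : PhiCarrier Φ a) :
    (phiCat Φ a).hom (yPhi Φ hΦ a x) ψ = ψ.1 x :=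
  ψ.2.1.iInf_qhom_hom x

theorem yPhi_fullyFaithful (hΦ : DistAx Φ) : FullyFaithful a (phiCat Φ a) (yPhi Φ hΦ a) :=
  fun x x' => phiCat_hom_yPhi hΦ x (yPhi Φ hΦ a x')

theorem mul_phiCat_hom_le (ψ ψ' : PhiCarrier Φ a) (x : X) :
    ψ.1 x * (phiCat Φ a).hom ψ ψ' ≤ ψ'.1 x :=
  le_qhom_iff.mp (iInf_le (fun x' => qhom (ψ.1 x') (ψ'.1 x')) x)

variable (Φ a) in
def phiEval : X → PhiCarrier Φ a → V := fun x ψ => ψ.1 x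

theorem isDist_phiEval : IsDist a (phiCat Φ a) (phiEval Φ a) :=
  ⟨fun x' x ψ => ψ.2.1 x' x, fun x ψ ψ' => mul_phiCat_hom_le ψ ψ' x⟩

theorem DistAx.phiEval_mem (hΦ : DistAx Φ) : Φ a (phiCat Φ a) (phiEval Φ a) :=
  hΦ.ax3 _ _ _ isDist_phiEval fun ψ => ψ.2.2

theorem yPhi_phiDense (hΦ : DistAx Φ) : PhiDense Φ a (phiCat Φ a) (yPhi Φ hΦ a) := by
  have : fStar (phiCat Φ a) (yPhi Φ hΦ a) = phiEval Φ a :=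
    funext fun x => funext fun ψ => phiCat_hom_yPhi hΦ x ψ
  rw [PhiDense, this]
  exact hΦ.phiEval_mem

theorem DistAx.column_mem (hΦ : DistAx Φ) {φ : Y → Z → V} (hd : IsDist b c φ)
    (hφ : Φ b c φ) (z : Z) : InPhi Φ b (fun y => φ y z) := by
  have hz : dComp (fCostar c fun _ : PUnit => z) φ = fun y _ => φ y z := by
    funext y _
    exact le_antisymm (iSup_le fun z' => hd.2 y z' z)
      (le_iSup_of_le z (le_mul_of_one_le_right' (c.refl z)))
  have := hΦ.ax2_left b (unitCat V) c φ (fun _ => z) hd (fun _ _ => c.refl z) hφ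
  rwa [hz] at this

def distMate (hΦ : DistAx Φ) {φ : Y → Z → V} (hd : IsDist b c φ) (hφ : Φ b c φ) (z : Z) :
    PhiCarrier Φ b :=
  ⟨fun y => φ y z, fun y' y => hd.1 y' y z, hΦ.column_mem hd hφ z⟩

theorem isVFunctor_distMate (hΦ : DistAx Φ) {φ : Y → Z → V} (hd : IsDist b c φ)
    (hφ : Φ b c φ) :
    IsVFunctor c (phiCat Φ b) (distMate hΦ hd hφ) :=
  fun z z' => le_iInf fun y => le_qhom_iff.mpr (hd.2 y z z')

theorem distMate_fStar_of_fullyFaithful (hΦ : DistAx Φ) {i : X → Y} (hi : FullyFaithful a b i)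
    (hdense : PhiDense Φ a b i) (x : X) :
    distMate hΦ (isDist_fStar hi.isVFunctor) hdense (i x) = yPhi Φ hΦ a x :=
  Subtype.ext <| funext fun x' => hi x' x

theorem isVFunctor_phiMap (hΦ : DistAx Φ) {f : X → Y} (hf : IsVFunctor a b f) :
    IsVFunctor (phiCat Φ a) (phiCat Φ b) (phiMap Φ hΦ a b f hf) := by
  intro ψ ψ'
  refine le_iInf fun y => le_qhom_iff.mpr ?_
  show (⨆ x, b.hom y (f x) * ψ.1 x) * (phiCat Φ a).hom ψ ψ' ≤ ⨆ x, b.hom y (f x) * ψ'.1 x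
  rw [mul_comm, mul_iSup']
  refine iSup_mono fun x => ?_
  rw [mul_comm, mul_assoc]
  exact mul_le_mul_right (mul_phiCat_hom_le ψ ψ' x) _

theorem phiMap_yPhi (hΦ : DistAx Φ) {f : X → Y} (hf : IsVFunctor a b f) (x : X) :
    phiMap Φ hΦ a b f hf (yPhi Φ hΦ a x) = yPhi Φ hΦ b (f x) := by
  refine Subtype.ext <| funext fun y => le_antisymm ?_ ?_
  · exact iSup_le fun x' => (mul_le_mul_right (hf x' x) _).trans (b.comp _ _ _)
  · exact le_iSup_of_le x (le_mul_of_one_le_right' (a.refl x))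

theorem phiCat_hom_phiMap_yPhi (hΦ : DistAx Φ) {f : X → Y} (hf : IsVFunctor a b f)
    (ψ : PhiCarrier Φ a) (y : Y) : (phiCat Φ b).hom (phiMap Φ hΦ a b f hf ψ) (yPhi Φ hΦ b y) =
      ⨅ x, qhom (ψ.1 x) (b.hom (f x) y) := by
  calc ⨅ y', qhom (⨆ x, b.hom y' (f x) * ψ.1 x) (b.hom y' y)
      = ⨅ y', ⨅ x, qhom (ψ.1 x) (qhom (b.hom y' (f x)) (b.hom y' y)) := by
        simp only [qhom_iSup_left, qhom_mul_left]
    _ = ⨅ x, qhom (ψ.1 x) (⨅ y', qhom (b.hom y' (f x)) (b.hom y' y)) := by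
        rw [iInf_comm]; simp only [qhom_iInf_right]
    _ = ⨅ x, qhom (ψ.1 x) (b.hom (f x) y) := by
        simp only [(b.isPresheaf_hom y).iInf_qhom_hom]

end Phi

section Equivalences

variable {Φ : DistClass V} {X : Type u} {a : VCatStr V X}

theorem PhiInjective.exists_retraction (hΦ : DistAx Φ) (h : PhiInjective Φ a) :
    ∃ S : PhiCarrier Φ a → X, IsVFunctor (phiCat Φ a) a S ∧
      VEquiv a (S ∘ yPhi Φ hΦ a) id :=
  h a (phiCat Φ a) id (yPhi Φ hΦ a) (fun _ _ => le_rfl) (yPhi_fullyFaithful hΦ).isVFunctor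
    (yPhi_fullyFaithful hΦ) (yPhi_phiDense hΦ)

theorem one_le_hom_yPhi_of_retraction (hΦ : DistAx Φ) {S : PhiCarrier Φ a → X}
    (hS : IsVFunctor (phiCat Φ a) a S) (hSy : VLe a id (S ∘ yPhi Φ hΦ a))
    (ψ : PhiCarrier Φ a) : (1 : V) ≤ (phiCat Φ a).hom ψ (yPhi Φ hΦ a (S ψ)) := by
  refine le_iInf fun x => one_le_qhom_iff.mpr ?_
  calc ψ.1 x ≤ a.hom x (S (yPhi Φ hΦ a x)) * a.hom (S (yPhi Φ hΦ a x)) (S ψ) :=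
        le_mul_of_one_le_of_le (hSy x) ((phiCat_hom_yPhi hΦ x ψ).ge.trans (hS _ _))
    _ ≤ a.hom x (S ψ) := a.comp _ _ _

theorem phiCocomplete_of_leftAdjoint (hΦ : DistAx Φ) {S : PhiCarrier Φ a → X}
    (hS : IsVFunctor (phiCat Φ a) a S)
    (unit : ∀ ψ, (1 : V) ≤ (phiCat Φ a).hom ψ (yPhi Φ hΦ a (S ψ)))
    (counit : ∀ x, (1 : V) ≤ a.hom (S (yPhi Φ hΦ a x)) x) : PhiCocomplete Φ a := by
  intro Y Z b c φ h hd hφ hh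
  refine ⟨S ∘ phiMap Φ hΦ b a h hh ∘ distMate hΦ hd hφ,
    hS.comp ((isVFunctor_phiMap hΦ hh).comp (isVFunctor_distMate hΦ hd hφ)), fun z x => ?_⟩
  rw [Function.comp_apply, Function.comp_apply,
    hom_eq_of_adjoint hS (yPhi_fullyFaithful hΦ).isVFunctor unit counit]
  exact phiCat_hom_phiMap_yPhi hΦ hh _ x

theorem PhiCocomplete.exists_retraction (hΦ : DistAx Φ) (h : PhiCocomplete Φ a) :
    ∃ S : PhiCarrier Φ a → X, IsVFunctor (phiCat Φ a) a S ∧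
      VEquiv a (S ∘ yPhi Φ hΦ a) id := by
  obtain ⟨S, hS, hcolim⟩ :=
    h a (phiCat Φ a) (phiEval Φ a) id isDist_phiEval hΦ.phiEval_mem fun _ _ => le_rfl
  have hSy (x x' : X) : a.hom (S (yPhi Φ hΦ a x)) x' = a.hom x x' :=
    (hcolim _ x').trans ((a.isPresheaf_hom x').iInf_qhom_hom x)
  exact ⟨S, hS, fun x => (a.refl x).trans (hSy x x).ge,
    fun x => (a.refl _).trans (hSy x _).le⟩

theorem phiInjective_of_retraction (hΦ : DistAx Φ) {S : PhiCarrier Φ a → X}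
    (hS : IsVFunctor (phiCat Φ a) a S) (hSy : VEquiv a (S ∘ yPhi Φ hΦ a) id) :
    PhiInjective Φ a := by
  intro A B α β f i hf hi hff hdense
  have hext (x : A) :
      phiMap Φ hΦ α a f hf (distMate hΦ (isDist_fStar hi) hdense (i x)) =
        yPhi Φ hΦ a (f x) := by
    rw [distMate_fStar_of_fullyFaithful hΦ hff hdense, phiMap_yPhi]
  refine ⟨S ∘ phiMap Φ hΦ α a f hf ∘ distMate hΦ (isDist_fStar hi) hdense,
    hS.comp ((isVFunctor_phiMap hΦ hf).comp (isVFunctor_distMate hΦ _ hdense)), ?_, ?_⟩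
  · intro x
    simp only [Function.comp_apply, hext]
    exact hSy.1 (f x)
  · intro x
    simp only [Function.comp_apply, hext]
    exact hSy.2 (f x)

end Equivalences

/-- `Φ`-injectivity, existence of a left inverse / left adjoint of `y^Φ_X` and
`Φ`-cocompleteness are equivalent. -/
theorem stmt9 (Φ : DistClass V) (hΦ : DistAx Φ) {X : Type u} (a : VCatStr V X) :
    List.TFAE [
      PhiInjective Φ a,
      ∃ S : PhiCarrier Φ a → X, IsVFunctor (phiCat Φ a) a S ∧
        VEquiv a (S ∘ yPhi Φ hΦ a) id,
      ∃ S : PhiCarrier Φ a → X, IsVFunctor (phiCat Φ a) a S ∧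
        (∀ ψ, (1 : V) ≤ (phiCat Φ a).hom ψ (yPhi Φ hΦ a (S ψ))) ∧
        (∀ x, (1 : V) ≤ a.hom (S (yPhi Φ hΦ a x)) x),
      PhiCocomplete Φ a ] := by
  tfae_have 1 → 2 := PhiInjective.exists_retraction hΦ
  tfae_have 2 → 1 := fun ⟨S, hS, hSy⟩ => phiInjective_of_retraction hΦ hS hSy
  tfae_have 2 → 3 := fun ⟨S, hS, hSy⟩ =>
    ⟨S, hS, one_le_hom_yPhi_of_retraction hΦ hS hSy.2, hSy.1⟩
  tfae_have 3 → 4 := fun ⟨S, hS, unit, counit⟩ =>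
    phiCocomplete_of_leftAdjoint hΦ hS unit counit
  tfae_have 4 → 2 := PhiCocomplete.exists_retraction hΦ
  tfae_finish
end
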